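/- Let G = (V, E) be a finite graph and construct the chemical reaction system Q_G as follows: reactions R_V = {r_v : v ∈ V} and R_E = {r'_1, …, r'_{|E|}} (with edges ordered e¹,…,e^{|E|}); r'_j is catalysed exactly by x_u and x_v where e^j = (u,v) and x_w is the product of r_w; each r_v is catalysed only by the product y_{|E|} of r'_{|E|}; the reactants of r'_j include the product y_{j−1} of r'_{j−1} for j > 1, and all other reactants are food. Then G has a vertex cover of size at most K if and only if there is a linear ordering of R_V ∪ R_E in which every reaction's reactants are products of earlier reactions or food, and at most K reactions lack a catalyst among the products of earlier reactions. -/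

import Mathlib

/-- In the CRS `Q_G` built from a graph with vertex set `V` and ordered edges
`e : Fin m → V × V`, the reactions are `Sum.inl v` (the reaction `r_v`) and
`Sum.inr j` (the chain reaction `r'_j`).  Given an injective position function
`pos` describing a linear ordering of the reactions, `violatesP2 pos e r` says
that no catalyst of `r` is a product of an earlier reaction: `r'_j` is catalysed
exactly by `x_u` and `x_v` (the products of `r_u` and `r_v` where `e j = (u, v)`),
and `r_v` is catalysed only by the super-catalyst `y_{m-1}`, the product of the
last chain reaction `r'_{m-1}`. -/
def violatesP2 {V : Type*} {m : ℕ} (hm : 1 ≤ m)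
    (pos : (V ⊕ Fin m) → ℕ) (e : Fin m → V × V) : (V ⊕ Fin m) → Prop
  | Sum.inl v => ¬ pos (Sum.inr ⟨m - 1, by omega⟩) < pos (Sum.inl v)
  | Sum.inr j => ¬ (pos (Sum.inl (e j).1) < pos (Sum.inr j) ∨
      pos (Sum.inl (e j).2) < pos (Sum.inr j))

/-- `satisfiesP1 pos` says that the ordering given by `pos` makes every
reaction's reactants available: the reactants of each `r_v` are food,
and the reactants of `r'_j` are food except for `y_{j-1}` (for `j > 0`),
the product of `r'_{j-1}`, so (P1) holds iff each `r'_{j-1}` precedes `r'_j`. -/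
def satisfiesP1 {V : Type*} {m : ℕ}
    (pos : (V ⊕ Fin m) → ℕ) : Prop :=
  ∀ j : Fin m, ∀ _ : 0 < (j : ℕ),
    pos (Sum.inr ⟨(j : ℕ) - 1, by omega⟩) < pos (Sum.inr j)

/-!
From a vertex cover `V'`, order the reactions as: the `r_v` with `v ∈ V'`, then the chain
`r'_0, …, r'_{m-1}`, then the remaining `r_v`. Every chain reaction then has an earlier
catalyst, and every `r_v` with `v ∉ V'` comes after the super-catalyst `y_{m-1}`, so exactly
the `r_v` with `v ∈ V'` violate (P2).

Conversely, (P1) forces the chain to be in order, so every `r'_j` precedes `r'_{m-1}`.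
Hence if `r'_j` does not violate (P2), one of its endpoint reactions `r_u` precedes `r'_j`
and so also `y_{m-1}`, i.e. `r_u` violates (P2). Mapping `r_v ↦ v` and `r'_j ↦ (e j).1` sends
the violators onto a vertex cover.
-/

open Function

section VertexCoverReduction

variable {V : Type*} {m : ℕ}

theorem satisfiesP1.strictMono {pos : V ⊕ Fin m → ℕ} (h : satisfiesP1 pos) :
    StrictMono fun j : Fin m => pos (Sum.inr j) := by
  cases m with
  | zero => exact fun a => a.elim0
  | succ n => exact Fin.strictMono_iff_lt_succ.2 fun i => h i.succ i.succ_pos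

theorem satisfiesP1.pos_inr_le_last {pos : V ⊕ Fin m → ℕ} (h : satisfiesP1 pos) (hm : 1 ≤ m)
    (j : Fin m) : pos (Sum.inr j) ≤ pos (Sum.inr ⟨m - 1, by omega⟩) :=
  h.strictMono.monotone (Fin.le_def.2 (Nat.le_sub_one_of_lt j.isLt))

theorem violatesP2_inr_or_endpoint {pos : V ⊕ Fin m → ℕ} (h : satisfiesP1 pos) (hm : 1 ≤ m)
    (e : Fin m → V × V) (j : Fin m) :
    violatesP2 hm pos e (Sum.inr j) ∨ violatesP2 hm pos e (Sum.inl (e j).1) ∨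
      violatesP2 hm pos e (Sum.inl (e j).2) := by
  have hlast := h.pos_inr_le_last hm j
  simp only [violatesP2]
  omega

theorem exists_cover_of_satisfiesP1 [Finite V] {pos : V ⊕ Fin m → ℕ} (h : satisfiesP1 pos)
    (hm : 1 ≤ m) (e : Fin m → V × V) :
    ∃ V' : Finset V, V'.card ≤ {r | violatesP2 hm pos e r}.ncard ∧
      ∀ j : Fin m, (e j).1 ∈ V' ∨ (e j).2 ∈ V' := by
  set f : V ⊕ Fin m → V := Sum.elim id fun j => (e j).1
  have hfin : (f '' {r | violatesP2 hm pos e r}).Finite := Set.toFinite _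
  refine ⟨hfin.toFinset, ?_, fun j => ?_⟩
  · rw [← Set.ncard_eq_toFinset_card _ hfin]
    exact Set.ncard_image_le
  · simp only [Set.Finite.mem_toFinset]
    rcases violatesP2_inr_or_endpoint h hm e j with hj | hu | hv
    · exact .inl ⟨Sum.inr j, hj, rfl⟩
    · exact .inl ⟨Sum.inl _, hu, rfl⟩
    · exact .inr ⟨Sum.inl _, hv, rfl⟩

noncomputable def coverOrder [Fintype V] [DecidableEq V] (m : ℕ) (V' : Finset V) : V ⊕ Fin m → ℕ :=
  Sum.elim
    (fun v => if v ∈ V' then Fintype.equivFin V v else Fintype.card V + m + Fintype.equivFin V v)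
    (fun j => Fintype.card V + j)

section coverOrder

variable [Fintype V] [DecidableEq V] (V' : Finset V)

theorem coverOrder_injective : Injective (coverOrder m V') := by
  refine Injective.sumElim (fun a b hab => ?_) (fun a b hab => Fin.ext (by simpa using hab))
    fun v j => ?_
  · have := (Fintype.equivFin V a).isLt; have := (Fintype.equivFin V b).isLt
    have : (Fintype.equivFin V a : ℕ) = Fintype.equivFin V b := by split_ifs at hab <;> omega
    exact (Fintype.equivFin V).injective (Fin.ext this)
  · have := (Fintype.equivFin V v).isLt; have := j.isLt
    split_ifs <;> omega

theorem satisfiesP1_coverOrder : satisfiesP1 (coverOrder m V') := by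
  intro j hj
  simp only [coverOrder, Sum.elim_inr]
  omega

theorem violatesP2_coverOrder_inl_iff (hm : 1 ≤ m) (e : Fin m → V × V) (v : V) :
    violatesP2 hm (coverOrder m V') e (Sum.inl v) ↔ v ∈ V' := by
  have := (Fintype.equivFin V v).isLt
  by_cases hv : v ∈ V'
  · simp only [violatesP2, coverOrder, Sum.elim_inl, Sum.elim_inr, hv, ↓reduceIte, iff_true, not_lt]
    omega
  · simp only [violatesP2, coverOrder, Sum.elim_inl, Sum.elim_inr, hv, ↓reduceIte, iff_false, not_not]
    omega

theorem not_violatesP2_coverOrder_inr (hm : 1 ≤ m) (e : Fin m → V × V) {j : Fin m}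
    (hj : (e j).1 ∈ V' ∨ (e j).2 ∈ V') : ¬ violatesP2 hm (coverOrder m V') e (Sum.inr j) := by
  simp only [violatesP2, coverOrder, Sum.elim_inl, Sum.elim_inr, not_not]
  rcases hj with hu | hu
  · have := (Fintype.equivFin V (e j).1).isLt
    exact .inl (by rw [if_pos hu]; omega)
  · have := (Fintype.equivFin V (e j).2).isLt
    exact .inr (by rw [if_pos hu]; omega)

theorem setOf_violatesP2_coverOrder (hm : 1 ≤ m) (e : Fin m → V × V)
    (hcov : ∀ j : Fin m, (e j).1 ∈ V' ∨ (e j).2 ∈ V') :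
    {r | violatesP2 hm (coverOrder m V') e r} = Sum.inl '' V' := by
  ext (v | j)
  · simp [violatesP2_coverOrder_inl_iff]
  · simpa using not_violatesP2_coverOrder_inr V' hm e (hcov j)

end coverOrder

end VertexCoverReduction

theorem stmt_19_general {V : Type*} [Fintype V]
    (m K : ℕ) (hm : 1 ≤ m) (e : Fin m → V × V) :
    (∃ V' : Finset V, V'.card ≤ K ∧
        ∀ j : Fin m, (e j).1 ∈ V' ∨ (e j).2 ∈ V') ↔
    (∃ pos : (V ⊕ Fin m) → ℕ, Function.Injective pos ∧
        satisfiesP1 pos ∧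
        Set.ncard {r : V ⊕ Fin m | violatesP2 hm pos e r} ≤ K) := by
  constructor
  · classical
    rintro ⟨V', hcard, hcov⟩
    refine ⟨coverOrder m V', coverOrder_injective V', satisfiesP1_coverOrder V', ?_⟩
    rwa [setOf_violatesP2_coverOrder V' hm e hcov, Set.ncard_image_of_injective _ Sum.inl_injective,
      Set.ncard_coe_finset]
  · rintro ⟨pos, -, hP1, hK⟩
    obtain ⟨V', hcard, hcov⟩ := exists_cover_of_satisfiesP1 hP1 hm e
    exact ⟨V', hcard.trans hK, hcov⟩

theorem stmt_19 {V : Type*} [Fintype V] [DecidableEq V]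
    (m K : ℕ) (hm : 1 ≤ m) (e : Fin m → V × V) :
    (∃ V' : Finset V, V'.card ≤ K ∧
        ∀ j : Fin m, (e j).1 ∈ V' ∨ (e j).2 ∈ V') ↔
    (∃ pos : (V ⊕ Fin m) → ℕ, Function.Injective pos ∧
        satisfiesP1 pos ∧
        Set.ncard {r : V ⊕ Fin m | violatesP2 hm pos e r} ≤ K) :=
  stmt_19_general m K hm e
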